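/- arXiv:1609.06083 — 3 statements merged into one kernel-verified Lean document; each statement's English description precedes it below -/
import Mathlib

section
/- Let A be an expansive matrix and let ρ₁, ρ₂ be two A-homogeneous quasi-norms on ℝ^d. Then ρ₁ and ρ₂ are equivalent: there exists C ≥ 1 such that for all x ∈ ℝ^d, (1/C) ρ₁(x) ≤ ρ₂(x) ≤ C ρ₁(x). -/
open Matrix

def Expansive {n : Type*} [Fintype n] [DecidableEq n] (A : Matrix n n ℝ) : Prop :=
  IsUnit A ∧ ∀ μ ∈ spectrum ℂ (A.map Complex.ofReal), 1 < ‖μ‖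

/-- `ρ` is a quasi-norm on `ℝ^d`: Borel measurable, nonnegative, vanishing exactly at `0`,
and satisfying a quasi-triangle inequality. -/
def IsQuasiNorm {d : ℕ} (ρ : (Fin d → ℝ) → ℝ) : Prop :=
  Measurable ρ ∧ (∀ x, 0 ≤ ρ x) ∧ (∀ x, ρ x = 0 ↔ x = 0) ∧
    ∃ C > 0, ∀ x y, ρ (x + y) ≤ C * (ρ x + ρ y)

/-- `ρ` is an `A`-homogeneous quasi-norm. -/
def IsHomQuasiNorm {d : ℕ} (A : Matrix (Fin d) (Fin d) ℝ) (ρ : (Fin d → ℝ) → ℝ) : Prop :=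
  IsQuasiNorm ρ ∧ ∀ x, ρ (A.mulVec x) = |A.det| * ρ x

/-!
Every nonzero `x` is `Aʲ z` for some `j ∈ ℤ` and some `z` in the compact annulus
`1 ≤ ‖z‖ ≤ ‖A‖`, because `A⁻ᵏ → 0` (Gelfand's formula: the eigenvalues of `A⁻¹` lie in the open
unit disc). As both quasi-norms scale by `|det A|ʲ`, it suffices to bound `ρ₂` above, and `ρ₁`
below by a positive constant, on the annulus. The upper bound holds on every compact set
(Steinhaus: some sublevel set of a measurable quasi-norm has positive measure, so its difference
set is a neighbourhood of `0`). For the lower bound, homogeneity and `|det A| > 1` force `ρ₁ → 0`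
at `0`, and the quasi-triangle inequality then keeps `ρ₁` away from `0` near each point of the
annulus.
-/

open Filter Topology MeasureTheory
open scoped Matrix.Norms.Operator

theorem IsCompact.exists_bound_of_eventually_le {X : Type*} [TopologicalSpace X] {K : Set X}
    (hK : IsCompact K) {f : X → ℝ} (hf : ∀ x ∈ K, ∃ M, ∀ᶠ y in 𝓝 x, f y ≤ M) :
    ∃ M, ∀ x ∈ K, f x ≤ M := by
  refine hK.induction_on ⟨0, by simp⟩
    (fun s t hst ⟨M, hM⟩ => ⟨M, fun x hx => hM x (hst hx)⟩)
    (fun s t ⟨M, hM⟩ ⟨N, hN⟩ => ⟨max M N, ?_⟩) fun x hx => ?_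
  · rintro y (hy | hy)
    exacts [(hM y hy).trans (le_max_left _ _), (hN y hy).trans (le_max_right _ _)]
  · obtain ⟨M, hM⟩ := hf x hx
    exact ⟨{y | f y ≤ M}, mem_nhdsWithin_of_mem_nhds hM, M, fun _ hy => hy⟩

section QuasiTriangle

variable {E : Type*} {ρ : E → ℝ} {C : ℝ}

theorem exists_bound_nhds_zero_of_quasiTriangle [NormedAddCommGroup E] [NormedSpace ℝ E]
    [FiniteDimensional ℝ E] [MeasurableSpace E] [BorelSpace E] (hmeas : Measurable ρ)
    (hC : 0 ≤ C) (htri : ∀ x y, ρ (x + y) ≤ C * (ρ x + ρ y)) :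
    ∃ M, ∀ᶠ x in 𝓝 0, ρ x ≤ M := by
  set F : ℕ → Set E := fun M => {x | ρ x ≤ M ∧ ρ (-x) ≤ M}
  have hF : ∀ M, MeasurableSet (F M) := fun M =>
    (hmeas measurableSet_Iic).inter ((hmeas.comp measurable_neg) measurableSet_Iic)
  obtain ⟨M, hM⟩ : ∃ M, 0 < Measure.addHaar (F M) := by
    by_contra! h
    have hcover : ⋃ M, F M = Set.univ := Set.eq_univ_of_forall fun x =>
      let ⟨M, hM⟩ := exists_nat_ge (max (ρ x) (ρ (-x)))
      Set.mem_iUnion.2 ⟨M, (le_max_left _ _).trans hM, (le_max_right _ _).trans hM⟩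
    have := measure_iUnion_null fun M => nonpos_iff_eq_zero.1 (h M)
    rw [hcover] at this
    exact NeZero.ne _ (Measure.measure_univ_eq_zero.1 this)
  refine ⟨C * (M + M), Filter.mem_of_superset
    (Measure.sub_mem_nhds_zero_of_addHaar_pos _ (F M) (hF M) hM) ?_⟩
  rintro _ ⟨a, ha, b, hb, rfl⟩
  calc ρ (a - b) = ρ (a + -b) := by rw [sub_eq_add_neg]
    _ ≤ C * (ρ a + ρ (-b)) := htri a (-b)
    _ ≤ C * (M + M) := by gcongr; exacts [ha.1, hb.2]

theorem IsCompact.exists_bound_of_quasiTriangle [NormedAddCommGroup E] [NormedSpace ℝ E]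
    [FiniteDimensional ℝ E] [MeasurableSpace E] [BorelSpace E] {K : Set E} (hK : IsCompact K)
    (hmeas : Measurable ρ) (hC : 0 ≤ C) (htri : ∀ x y, ρ (x + y) ≤ C * (ρ x + ρ y)) :
    ∃ M, ∀ x ∈ K, ρ x ≤ M := by
  obtain ⟨M, hM⟩ := exists_bound_nhds_zero_of_quasiTriangle hmeas hC htri
  refine hK.exists_bound_of_eventually_le fun x _ => ⟨C * (M + ρ x), ?_⟩
  have hsub : Tendsto (fun y => y - x) (𝓝 x) (𝓝 0) := by
    simpa using (tendsto_id (x := 𝓝 x)).sub_const x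
  filter_upwards [hsub.eventually hM] with y hy
  calc ρ y = ρ (y - x + x) := by rw [sub_add_cancel]
    _ ≤ C * (ρ (y - x) + ρ x) := htri _ _
    _ ≤ C * (M + ρ x) := by gcongr

theorem IsCompact.exists_pos_le_of_quasiTriangle [AddGroup E] [TopologicalSpace E]
    [IsTopologicalAddGroup E] {K : Set E} (hK : IsCompact K) (hK0 : (0 : E) ∉ K)
    (hpos : ∀ x ≠ 0, 0 < ρ x) (hC : 0 < C) (htri : ∀ x y, ρ (x + y) ≤ C * (ρ x + ρ y))
    (hρ : Tendsto ρ (𝓝 0) (𝓝 0)) :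
    ∃ c > 0, ∀ x ∈ K, c ≤ ρ x := by
  have hposK : ∀ x ∈ K, 0 < ρ x := fun x hx => hpos x (ne_of_mem_of_not_mem hx hK0)
  obtain ⟨M, hM⟩ := hK.exists_bound_of_eventually_le (f := fun x => (ρ x)⁻¹) fun z hz => by
    have hz0 := hposK z hz
    have hnear : ∀ᶠ y in 𝓝 z, ρ (z - y) < ρ z / (2 * C) := by
      have : Tendsto (fun y => z - y) (𝓝 z) (𝓝 0) := by
        simpa using (tendsto_const_nhds (x := z)).sub (tendsto_id (x := 𝓝 z))
      exact (hρ.comp this).eventually (gt_mem_nhds (by positivity))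
    refine ⟨2 * C / ρ z, hnear.mono fun y hy => ?_⟩
    have htri' : ρ z ≤ C * (ρ (z - y) + ρ y) := by simpa using htri (z - y) y
    have hy' : ρ z / (2 * C) ≤ ρ y := by
      rw [div_le_iff₀ (by positivity)]
      rw [lt_div_iff₀ (by positivity)] at hy
      nlinarith
    calc (ρ y)⁻¹ ≤ (ρ z / (2 * C))⁻¹ := inv_anti₀ (by positivity) hy'
      _ = 2 * C / ρ z := inv_div _ _
  exact ⟨(max M 1)⁻¹, by positivity, fun x hx =>
    inv_le_of_inv_le₀ (hposK x hx) ((hM x hx).trans (le_max_left _ _))⟩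

end QuasiTriangle

theorem tendsto_pow_atTop_nhds_zero_of_spectralRadius_lt_one {𝔸 : Type*} [NormedRing 𝔸]
    [NormedAlgebra ℂ 𝔸] [CompleteSpace 𝔸] {a : 𝔸} (ha : spectralRadius ℂ a < 1) :
    Tendsto (fun n : ℕ => a ^ n) atTop (𝓝 0) := by
  obtain ⟨r, har, hr1⟩ := ENNReal.lt_iff_exists_nnreal_btwn.1 ha
  have hle : ∀ᶠ n : ℕ in atTop, ‖a ^ n‖ ≤ (r : ℝ) ^ n := by
    filter_upwards [eventually_gt_atTop 0,
      (spectrum.pow_nnnorm_pow_one_div_tendsto_nhds_spectralRadius a).eventually_lt_const har]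
      with n hn0 hn
    rw [one_div, ENNReal.rpow_inv_lt_iff (by positivity), ENNReal.rpow_natCast,
      ← ENNReal.coe_pow, ENNReal.coe_lt_coe, ← NNReal.coe_lt_coe] at hn
    exact_mod_cast hn.le
  exact squeeze_zero_norm' hle (tendsto_pow_atTop_nhds_zero_of_lt_one r.coe_nonneg (mod_cast hr1))

theorem Int.exists_le_and_succ_lt {f : ℤ → ℝ} {a : ℝ} (hf : ∀ᶠ k in atTop, f k < a)
    (ha : ∃ k, a ≤ f k) : ∃ j, a ≤ f j ∧ f (j + 1) < a := by
  obtain ⟨N, hN⟩ := eventually_atTop.1 hf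
  obtain ⟨j, hj, hjmax⟩ := Int.exists_greatest_of_bdd
    ⟨N, fun k hk => le_of_not_ge fun hNk => (hN k hNk).not_ge hk⟩ ha
  exact ⟨j, hj, lt_of_not_ge fun h => (hjmax _ h).not_gt (lt_add_one j)⟩

section Expansive

variable {n : Type*} [Fintype n] [DecidableEq n]

theorem Matrix.tendsto_pow_atTop_nhds_zero_of_forall_norm_lt_one {B : Matrix n n ℝ}
    (hB : ∀ μ ∈ spectrum ℂ (B.map Complex.ofReal), ‖μ‖ < 1) :
    Tendsto (fun k : ℕ => B ^ k) atTop (𝓝 0) := by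
  cases isEmpty_or_nonempty n
  · exact tendsto_const_nhds.congr fun _ => Subsingleton.elim _ _
  have : CompleteSpace (Matrix n n ℂ) := FiniteDimensional.complete ℂ _
  have hρ : spectralRadius ℂ (B.map Complex.ofReal) < 1 := by
    simpa using spectrum.spectralRadius_lt_of_forall_lt (B.map Complex.ofReal) (r := 1)
      fun μ hμ => by simpa [← NNReal.coe_lt_coe] using hB μ hμ
  have hre : Continuous fun M : Matrix n n ℂ => M.map Complex.re :=
    continuous_id.matrix_map Complex.continuous_re
  convert (hre.tendsto 0).comp (tendsto_pow_atTop_nhds_zero_of_spectralRadius_lt_one hρ)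
    using 2 with k
  · change B ^ k = (Complex.ofRealHom.mapMatrix B ^ k).map Complex.re
    rw [← map_pow, RingHom.mapMatrix_apply, Matrix.map_map]
    ext i j
    simp
  · simp

variable {A : Matrix n n ℝ}

theorem Expansive.isUnit_det (hA : Expansive A) : IsUnit A.det :=
  (Matrix.isUnit_iff_isUnit_det A).1 hA.1

theorem Expansive.tendsto_inv_pow (hA : Expansive A) :
    Tendsto (fun k : ℕ => A⁻¹ ^ k) atTop (𝓝 0) := by
  refine Matrix.tendsto_pow_atTop_nhds_zero_of_forall_norm_lt_one fun μ hμ => ?_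
  obtain ⟨v, hv⟩ := hA.1.map (Complex.ofRealHom.mapMatrix (m := n))
  have hinv : A⁻¹.map Complex.ofReal = ↑v⁻¹ := by
    rw [Matrix.coe_units_inv, hv, eq_comm]
    apply Matrix.inv_eq_left_inv
    change Complex.ofRealHom.mapMatrix A⁻¹ * Complex.ofRealHom.mapMatrix A = 1
    rw [← map_mul, Matrix.nonsing_inv_mul A hA.isUnit_det, map_one]
  rw [hinv, ← spectrum.inv₀_mem_iff, hv] at hμ
  have := hA.2 _ hμ
  rw [norm_inv] at this
  exact ((one_lt_inv_iff₀).1 this).2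

theorem Expansive.one_lt_abs_det [Nonempty n] (hA : Expansive A) : 1 < |A.det| := by
  have hlim : Tendsto (fun k : ℕ => |A.det|⁻¹ ^ k) atTop (𝓝 0) := by
    have := ((continuous_abs.comp continuous_id.matrix_det).tendsto 0).comp hA.tendsto_inv_pow
    simpa [Function.comp_def, Matrix.det_pow, abs_inv] using this
  by_contra! hle
  have hge : ∀ k : ℕ, 1 ≤ |A.det|⁻¹ ^ k := fun k =>
    one_le_pow₀ ((one_le_inv₀ (abs_pos.2 hA.isUnit_det.ne_zero)).2 hle)
  exact absurd (ge_of_tendsto' hlim hge) (by norm_num)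

def Matrix.annulus (A : Matrix n n ℝ) : Set (n → ℝ) :=
  Metric.closedBall 0 ‖A‖ \ Metric.ball 0 1

theorem Matrix.isCompact_annulus (A : Matrix n n ℝ) : IsCompact A.annulus :=
  (isCompact_closedBall _ _).diff Metric.isOpen_ball

theorem Matrix.zero_notMem_annulus (A : Matrix n n ℝ) : (0 : n → ℝ) ∉ A.annulus := by
  simp [Matrix.annulus]

theorem Expansive.eventually_norm_zpow_neg_mulVec_lt_one (hA : Expansive A) (x : n → ℝ) :
    ∀ᶠ k : ℤ in atTop, ‖A ^ (-k) *ᵥ x‖ < 1 := by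
  have hlim : Tendsto (fun m : ℕ => ‖A⁻¹ ^ m‖ * ‖x‖) atTop (𝓝 0) := by
    simpa using (tendsto_zero_iff_norm_tendsto_zero.1 hA.tendsto_inv_pow).mul_const ‖x‖
  obtain ⟨N, hN⟩ := eventually_atTop.1 (hlim.eventually_lt_const one_pos)
  refine eventually_atTop.2 ⟨N, fun k hk => ?_⟩
  lift k to ℕ using (Int.natCast_nonneg N).trans hk
  rw [Matrix.zpow_neg_natCast, ← Matrix.inv_pow']
  exact (linfty_opNorm_mulVec _ _).trans_lt (hN k (mod_cast hk))

theorem Expansive.exists_one_le_norm_zpow_neg_mulVec (hA : Expansive A) {x : n → ℝ}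
    (hx : x ≠ 0) : ∃ k : ℤ, 1 ≤ ‖A ^ (-k) *ᵥ x‖ := by
  have hx' : 0 < ‖x‖ := norm_pos_iff.2 hx
  obtain ⟨m, hm⟩ :=
    ((tendsto_zero_iff_norm_tendsto_zero.1 hA.tendsto_inv_pow).eventually_lt_const hx').exists
  refine ⟨-m, ?_⟩
  have hinv : A⁻¹ ^ m *ᵥ (A ^ m *ᵥ x) = x := by
    rw [Matrix.mulVec_mulVec, Matrix.inv_pow',
      Matrix.nonsing_inv_mul _ (Matrix.det_pow A m ▸ hA.isUnit_det.pow m), Matrix.one_mulVec]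
  rw [neg_neg, zpow_natCast]
  have : ‖x‖ ≤ ‖x‖ * ‖A ^ m *ᵥ x‖ :=
    calc ‖x‖ = ‖A⁻¹ ^ m *ᵥ (A ^ m *ᵥ x)‖ := by rw [hinv]
      _ ≤ ‖A⁻¹ ^ m‖ * ‖A ^ m *ᵥ x‖ := linfty_opNorm_mulVec _ _
      _ ≤ ‖x‖ * ‖A ^ m *ᵥ x‖ := by gcongr
  nlinarith

theorem Expansive.exists_zpow_mulVec_mem_annulus (hA : Expansive A) {x : n → ℝ} (hx : x ≠ 0) :
    ∃ j : ℤ, ∃ z ∈ A.annulus, x = A ^ j *ᵥ z := by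
  obtain ⟨j, hj, hj1⟩ := Int.exists_le_and_succ_lt (hA.eventually_norm_zpow_neg_mulVec_lt_one x)
    (hA.exists_one_le_norm_zpow_neg_mulVec hx)
  refine ⟨j, A ^ (-j) *ᵥ x, ⟨?_, by simpa using hj⟩, ?_⟩
  · rw [Metric.mem_closedBall, dist_zero_right, show -j = 1 + -(j + 1) by ring,
      Matrix.zpow_add hA.isUnit_det, zpow_one, ← Matrix.mulVec_mulVec]
    exact (linfty_opNorm_mulVec _ _).trans (mul_le_of_le_one_right (norm_nonneg _) hj1.le)
  · rw [Matrix.mulVec_mulVec, ← Matrix.zpow_add hA.isUnit_det, add_neg_cancel, zpow_zero,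
      Matrix.one_mulVec]

end Expansive

namespace IsHomQuasiNorm

variable {d : ℕ} {A : Matrix (Fin d) (Fin d) ℝ} {ρ ρ₁ ρ₂ : (Fin d → ℝ) → ℝ}

theorem apply_pow_mulVec (h : IsHomQuasiNorm A ρ) (k : ℕ) (x : Fin d → ℝ) :
    ρ (A ^ k *ᵥ x) = |A.det| ^ k * ρ x := by
  induction k with
  | zero => simp
  | succ k ih => rw [pow_succ', ← Matrix.mulVec_mulVec, h.2, ih, pow_succ', mul_assoc]

theorem apply_zpow_mulVec (h : IsHomQuasiNorm A ρ) (hA : IsUnit A.det) (j : ℤ)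
    (x : Fin d → ℝ) : ρ (A ^ j *ᵥ x) = |A.det| ^ j * ρ x := by
  cases j with
  | ofNat k => exact h.apply_pow_mulVec k x
  | negSucc k =>
    have hx : x = A ^ (k + 1) *ᵥ (A ^ Int.negSucc k *ᵥ x) := by
      rw [Matrix.mulVec_mulVec, ← zpow_natCast, ← Matrix.zpow_add hA, Int.ofNat_add_negSucc]
      simp [Int.subNatNat_self]
    conv_rhs => rw [hx, h.apply_pow_mulVec, zpow_negSucc, ← mul_assoc,
      inv_mul_cancel₀ (pow_ne_zero _ (abs_pos.2 hA.ne_zero).ne'), one_mul]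

theorem tendsto_nhds_zero (h : IsHomQuasiNorm A ρ) (hA : 1 < |A.det|) :
    Tendsto ρ (𝓝 0) (𝓝 0) := by
  obtain ⟨hmeas, hnn, -, C, hC, htri⟩ := h.1
  obtain ⟨M, hM⟩ := exists_bound_nhds_zero_of_quasiTriangle hmeas hC.le htri
  have hbound : ∀ k : ℕ, ∀ᶠ y in 𝓝 0, ρ y ≤ |A.det|⁻¹ ^ k * M := fun k => by
    have hcont : Tendsto (fun y => A ^ k *ᵥ y) (𝓝 0) (𝓝 0) := by
      simpa using (continuous_const.matrix_mulVec continuous_id).tendsto (0 : Fin d → ℝ)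
    filter_upwards [hcont.eventually hM] with y hy
    rw [h.apply_pow_mulVec] at hy
    rw [inv_pow, inv_mul_eq_div, le_div_iff₀ (by positivity), mul_comm]
    exact hy
  refine tendsto_order.2 ⟨fun a ha => Eventually.of_forall fun y => ha.trans_le (hnn y),
    fun a ha => ?_⟩
  have hlim : Tendsto (fun k : ℕ => |A.det|⁻¹ ^ k * M) atTop (𝓝 0) := by
    simpa using (tendsto_pow_atTop_nhds_zero_of_lt_one (by positivity)
      (inv_lt_one_of_one_lt₀ hA)).mul_const M
  obtain ⟨k, hk⟩ := (hlim.eventually_lt_const ha).exists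
  exact (hbound k).mono fun y hy => hy.trans_lt hk

theorem exists_le_mul [NeZero d] (hA : Expansive A) (h₁ : IsHomQuasiNorm A ρ₁)
    (h₂ : IsHomQuasiNorm A ρ₂) : ∃ C, ∀ x, ρ₂ x ≤ C * ρ₁ x := by
  obtain ⟨-, hnn₁, hzero₁, C₁, hC₁, htri₁⟩ := h₁.1
  obtain ⟨hmeas₂, -, hzero₂, C₂, hC₂, htri₂⟩ := h₂.1
  obtain ⟨M, hM⟩ := A.isCompact_annulus.exists_bound_of_quasiTriangle hmeas₂ hC₂.le htri₂
  obtain ⟨c, hc, hcρ⟩ := A.isCompact_annulus.exists_pos_le_of_quasiTriangle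
    A.zero_notMem_annulus (fun x hx => (hnn₁ x).lt_of_ne' (mt (hzero₁ x).1 hx)) hC₁ htri₁
    (h₁.tendsto_nhds_zero hA.one_lt_abs_det)
  refine ⟨max M 0 / c, fun x => ?_⟩
  rcases eq_or_ne x 0 with rfl | hx
  · simp [(hzero₁ 0).2, (hzero₂ 0).2]
  obtain ⟨j, z, hz, rfl⟩ := hA.exists_zpow_mulVec_mem_annulus hx
  rw [h₁.apply_zpow_mulVec hA.isUnit_det, h₂.apply_zpow_mulVec hA.isUnit_det]
  calc |A.det| ^ j * ρ₂ z ≤ |A.det| ^ j * max M 0 := by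
        gcongr; exact (hM z hz).trans (le_max_left _ _)
    _ = max M 0 / c * (|A.det| ^ j * c) := by field_simp
    _ ≤ max M 0 / c * (|A.det| ^ j * ρ₁ z) := by gcongr; exact hcρ z hz

end IsHomQuasiNorm

/-- Any two `A`-homogeneous quasi-norms are equivalent. -/
theorem homQuasiNorm_equivalent {d : ℕ} (A : Matrix (Fin d) (Fin d) ℝ) (hA : Expansive A)
    (ρ₁ ρ₂ : (Fin d → ℝ) → ℝ) (h₁ : IsHomQuasiNorm A ρ₁) (h₂ : IsHomQuasiNorm A ρ₂) :
    ∃ C ≥ (1 : ℝ), ∀ x, (1 / C) * ρ₁ x ≤ ρ₂ x ∧ ρ₂ x ≤ C * ρ₁ x := by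
  rcases Nat.eq_zero_or_pos d with rfl | hd
  · refine ⟨1, le_rfl, fun x => ?_⟩
    rw [Subsingleton.elim x 0, (h₁.1.2.2.1 0).2 rfl, (h₂.1.2.2.1 0).2 rfl]
    norm_num
  have : NeZero d := ⟨hd.ne'⟩
  obtain ⟨C₁, hC₁⟩ := h₁.exists_le_mul hA h₂
  obtain ⟨C₂, hC₂⟩ := h₂.exists_le_mul hA h₁
  set C := max (max C₁ C₂) 1
  have hC : 1 ≤ C := le_max_right _ _
  have hC₁C : C₁ ≤ C := (le_max_left _ _).trans (le_max_left _ _)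
  have hC₂C : C₂ ≤ C := (le_max_right _ _).trans (le_max_left _ _)
  refine ⟨C, hC, fun x => ⟨?_, ?_⟩⟩
  · rw [one_div, inv_mul_le_iff₀ (zero_lt_one.trans_le hC)]
    exact (hC₂ x).trans (mul_le_mul_of_nonneg_right hC₂C (h₂.1.2.1 x))
  · exact (hC₁ x).trans (mul_le_mul_of_nonneg_right hC₁C (h₁.1.2.1 x))
end

section
/- Let A = [[2,2],[0,2]] and B = [[2,4],[0,2]]. Then for all k ∈ ℕ, A^{-k} B^k = [[1,k],[0,1]]. Consequently sup_{k∈ℕ} ‖A^{-k} B^k‖ = ∞, so A and B are not coarsely equivalent (even though they have identical generalized eigenspaces and ε(A,B) = 1). -/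
/-!
With `U t = !![1, t; 0, 1]` we have `A = 2 • U 1` and `B = 2 • U 2`, so `A⁻¹` and `B` commute
and `A⁻¹ * B = U 1`. Hence `A ^ (-k) * B ^ k = (A⁻¹ * B) ^ k = U k`, and the operator norm of
`U k` is at least its entry `k`.
-/

open Matrix

noncomputable def opNorm {n : Type*} [Fintype n] [DecidableEq n] (A : Matrix n n ℝ) : ℝ :=
  ‖Matrix.toEuclideanCLM (𝕜 := ℝ) (n := n) A‖

theorem abs_apply_le_opNorm {n : Type*} [Fintype n] [DecidableEq n] (A : Matrix n n ℝ)
    (i j : n) : |A i j| ≤ opNorm A := by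
  let T := Matrix.toEuclideanCLM (𝕜 := ℝ) A
  have hcol : T (EuclideanSpace.single j 1) i = A i j := by simp [T, Matrix.mulVec, dotProduct]
  calc |A i j| = ‖T (EuclideanSpace.single j 1) i‖ := by rw [hcol, Real.norm_eq_abs]
    _ ≤ ‖T (EuclideanSpace.single j 1)‖ := PiLp.norm_apply_le _ _
    _ ≤ opNorm A * ‖EuclideanSpace.single j (1 : ℝ)‖ := T.le_opNorm _
    _ = opNorm A := by rw [PiLp.norm_single, norm_one, mul_one]

theorem unitriangular_mul_unitriangular {R : Type*} [Semiring R] (s t : R) :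
    !![1, s; 0, 1] * !![1, t; 0, 1] = !![1, s + t; 0, (1 : R)] := by
  simp [add_comm]

theorem unitriangular_pow {R : Type*} [Semiring R] (t : R) (k : ℕ) :
    !![1, t; 0, 1] ^ k = !![1, k * t; 0, (1 : R)] := by
  induction k with
  | zero => simp [one_fin_two]
  | succ k ih => rw [pow_succ, ih, unitriangular_mul_unitriangular, Nat.cast_succ, add_one_mul]

theorem zpow_neg_mul_zpow_eq_inv_mul_pow {n K : Type*} [Fintype n] [DecidableEq n] [Field K]
    {A B : Matrix n n K} (h : Commute A⁻¹ B) (k : ℕ) :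
    A ^ (-(k : ℤ)) * B ^ (k : ℤ) = (A⁻¹ * B) ^ k := by
  rw [zpow_neg_natCast, zpow_natCast, ← inv_pow', h.mul_pow]

theorem bownik_zpow_neg_mul_zpow (k : ℕ) :
    (!![(2:ℝ), 2; 0, 2]) ^ (-(k : ℤ)) * (!![(2:ℝ), 4; 0, 2]) ^ (k : ℤ) =
      !![1, (k : ℝ); 0, 1] := by
  have hinv : (!![(2:ℝ), 2; 0, 2])⁻¹ = !![1/2, -1/2; 0, 1/2] :=
    inv_eq_right_inv (by simp [one_fin_two]; norm_num)
  have hleft : (!![(2:ℝ), 2; 0, 2])⁻¹ * !![2, 4; 0, 2] = !![1, 1; 0, 1] := by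
    rw [hinv]; simp; norm_num
  have hright : !![(2:ℝ), 4; 0, 2] * (!![(2:ℝ), 2; 0, 2])⁻¹ = !![1, 1; 0, 1] := by
    rw [hinv]; simp; norm_num
  rw [zpow_neg_mul_zpow_eq_inv_mul_pow (hleft.trans hright.symm), hleft, unitriangular_pow,
    mul_one]

/-- Counterexample to Bownik's Theorem (10.3): for A = [[2,2],[0,2]], B = [[2,4],[0,2]],
one has A^{-k} B^k = [[1,k],[0,1]], so the norms ‖A^{-k}B^k‖ are unbounded and A, B are
not coarsely equivalent. -/
theorem counterexample_bownik :
    (∀ k : ℕ, (!![(2:ℝ), 2; 0, 2]) ^ (-(k : ℤ)) * (!![(2:ℝ), 4; 0, 2]) ^ (k : ℤ) =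
      !![1, (k : ℝ); 0, 1]) ∧
    ¬ ∃ M : ℝ, ∀ k : ℕ,
      opNorm ((!![(2:ℝ), 2; 0, 2]) ^ (-(k : ℤ)) * (!![(2:ℝ), 4; 0, 2]) ^ (k : ℤ)) ≤ M := by
  refine ⟨bownik_zpow_neg_mul_zpow, ?_⟩
  rintro ⟨M, hM⟩
  obtain ⟨k, hk⟩ := exists_nat_gt M
  have hentry : (k : ℝ) ≤ opNorm !![1, (k : ℝ); 0, 1] := by
    simpa using abs_apply_le_opNorm !![1, (k : ℝ); 0, 1] 0 1
  rw [← bownik_zpow_neg_mul_zpow] at hentry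
  linarith [hM k]
end

section
/- Let A, B be d×d real expansive matrices each having a single eigenvalue λ > 0 (so (A − λI)^d = 0 and (B − λI)^d = 0, λ > 1). If sup_{k∈ℕ} ‖A^{-k} B^k‖ < ∞, then A = B. -/
open Matrix

/-!
Write `A = λ • U` and `B = λ • V`. The spectral hypothesis makes `U` and `V` unipotent, hence
also `U⁻¹`, and `A ^ (-k) * B ^ k = U⁻¹ ^ k * V ^ k`. By the binomial theorem, truncated by
nilpotency, every entry of `U⁻¹ ^ k * V ^ k` is a polynomial in `k`. Entries are bounded by the
operator norm, and a polynomial bounded on `ℕ` is constant, so `U⁻¹ ^ k * V ^ k` equals its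
value `1` at `k = 0`; at `k = 1` this says `U = V`.
-/

open Polynomial Finset

lemma Polynomial.exists_eval_natCast_eq_choose (K : Type*) [Field K] [CharZero K] (i : ℕ) :
    ∃ q : K[X], ∀ k : ℕ, q.eval (k : K) = k.choose i := by
  refine ⟨(i.factorial : K)⁻¹ • descPochhammer K i, fun k => ?_⟩
  rw [eval_smul, descPochhammer_eval_eq_descFactorial, Nat.descFactorial_eq_factorial_mul_choose,
    smul_eq_mul, Nat.cast_mul, inv_mul_cancel_left₀ (Nat.cast_ne_zero.mpr i.factorial_ne_zero)]

lemma Polynomial.eval_natCast_eq_eval_zero_of_abs_le {p : ℝ[X]} {M : ℝ}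
    (hp : ∀ k : ℕ, |p.eval (k : ℝ)| ≤ M) (k : ℕ) : p.eval (k : ℝ) = p.eval 0 := by
  have hdeg : p.degree ≤ 0 := by
    by_contra! hdeg
    obtain ⟨l, hl⟩ := (((p.abs_tendsto_atTop hdeg).comp
      tendsto_natCast_atTop_atTop).eventually_gt_atTop M).exists
    exact (hp l).not_gt hl
  rw [eq_C_of_degree_le_zero hdeg, eval_C, eval_C]

lemma one_add_pow_eq_sum_range_of_pow_eq_zero {R : Type*} [Ring R] {N : R} {m : ℕ}
    (hN : N ^ m = 0) (k : ℕ) : (1 + N) ^ k = ∑ i ∈ range m, k.choose i • N ^ i := by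
  have hle : range m ⊆ range (k + 1 + m) := range_subset_range.mpr (Nat.le_add_left m _)
  have hge : range (k + 1) ⊆ range (k + 1 + m) := range_subset_range.mpr (Nat.le_add_right _ m)
  rw [sum_subset hle fun i _ hi => by rw [pow_eq_zero_of_le (by simpa using hi) hN, smul_zero],
    add_comm, (Commute.one_right N).add_pow,
    sum_subset hge fun i _ hi => by
      rw [Nat.choose_eq_zero_of_lt (by simpa using hi), Nat.cast_zero, mul_zero]]
  simp [nsmul_eq_mul, Nat.cast_comm]

namespace Matrix

variable {n : Type*} [Fintype n] [DecidableEq n]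

lemma abs_apply_le_opNorm (M : Matrix n n ℝ) (i j : n) : |M i j| ≤ opNorm M := by
  set T := toEuclideanCLM (𝕜 := ℝ) (n := n) M
  have hcol : M i j = T (EuclideanSpace.single j 1) i := by simp [T, mulVec_single]
  calc |M i j| ≤ ‖T (EuclideanSpace.single j 1)‖ := by
        rw [hcol, ← Real.norm_eq_abs]
        exact PiLp.norm_apply_le _ i
    _ ≤ ‖T‖ * ‖EuclideanSpace.single j (1 : ℝ)‖ := T.le_opNorm _
    _ = opNorm M := by simp [T, opNorm]

lemma charpoly_eq_X_sub_C_pow_of_spectrum_subset {K : Type*} [Field K] [IsAlgClosed K]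
    {A : Matrix n n K} {lam : K} (h : ∀ μ ∈ spectrum K A, μ = lam) :
    A.charpoly = (X - C lam) ^ Fintype.card n := by
  have hroots : A.charpoly.roots = Multiset.replicate (Fintype.card n) lam := by
    refine Multiset.eq_replicate.mpr ⟨?_, fun μ hμ => h μ ?_⟩
    · rw [IsAlgClosed.card_roots_eq_natDegree, charpoly_natDegree_eq_dim]
    · exact mem_spectrum_iff_isRoot_charpoly.mpr (isRoot_of_mem_roots hμ)
  rw [← prod_multiset_X_sub_C_of_monic_of_roots_card_eq A.charpoly_monic
    IsAlgClosed.card_roots_eq_natDegree, hroots, Multiset.map_replicate, Multiset.prod_replicate]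

lemma isNilpotent_sub_smul_one_of_spectrum_subset {K L : Type*} [Field K] [Field L]
    [Algebra K L] [IsAlgClosed L] {A : Matrix n n K} {lam : K}
    (h : ∀ μ ∈ spectrum L (A.map (algebraMap K L)), μ = algebraMap K L lam) :
    IsNilpotent (A - lam • 1) := by
  have hchar : A.charpoly = (X - C lam) ^ Fintype.card n := by
    apply Polynomial.map_injective (algebraMap K L) (algebraMap K L).injective
    rw [← charpoly_map, charpoly_eq_X_sub_C_pow_of_spectrum_subset h]
    simp
  refine ⟨Fintype.card n, ?_⟩
  simpa [hchar, Algebra.algebraMap_eq_smul_one] using aeval_self_charpoly A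

lemma isNilpotent_inv_smul_sub_one {K : Type*} [Field K] {A : Matrix n n K} {c : K}
    (hc : c ≠ 0) (hA : IsNilpotent (A - c • 1)) : IsNilpotent (c⁻¹ • A - 1) := by
  rw [← inv_smul_smul₀ hc (1 : Matrix n n K), ← smul_sub]
  exact hA.smul _

lemma isUnit_det_of_isNilpotent_sub_one {R : Type*} [CommRing R] {U : Matrix n n R}
    (hU : IsNilpotent (U - 1)) : IsUnit U.det := by
  simpa [isUnit_iff_isUnit_det] using hU.isUnit_one_add

lemma isNilpotent_nonsing_inv_sub_one {R : Type*} [CommRing R] {U : Matrix n n R}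
    (hU : IsNilpotent (U - 1)) : IsNilpotent (U⁻¹ - 1) := by
  have hdet := isUnit_det_of_isNilpotent_sub_one hU
  have hcomm : Commute U⁻¹ U := (nonsing_inv_mul U hdet).trans (mul_nonsing_inv U hdet).symm
  have heq : U⁻¹ - 1 = -(U⁻¹ * (U - 1)) := by
    rw [mul_sub, nonsing_inv_mul U hdet, mul_one]
    abel
  rw [heq]
  exact (Commute.isNilpotent_mul_left (hcomm.sub_right (Commute.one_right _)) hU).neg

lemma smul_zpow_neg_mul_smul_zpow {K : Type*} [Field K] {c : K} (hc : c ≠ 0)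
    {U : Matrix n n K} (hU : IsUnit U.det) (V : Matrix n n K) (k : ℕ) :
    (c • U) ^ (-(k : ℤ)) * (c • V) ^ (k : ℤ) = U⁻¹ ^ k * V ^ k := by
  have hinv : (c ^ k • U ^ k)⁻¹ = (c ^ k)⁻¹ • (U ^ k)⁻¹ :=
    inv_eq_left_inv <| by
      rw [smul_mul_smul_comm, inv_mul_cancel₀ (pow_ne_zero k hc), one_smul,
        nonsing_inv_mul _ (by simpa only [det_pow] using hU.pow k)]
  rw [zpow_neg_natCast, zpow_natCast, _root_.smul_pow, _root_.smul_pow, hinv, smul_mul_smul_comm,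
    inv_mul_cancel₀ (pow_ne_zero k hc), one_smul, inv_pow']

lemma exists_map_eval_eq_pow_of_isNilpotent_sub_one {K : Type*} [Field K] [CharZero K]
    {U : Matrix n n K} (hU : IsNilpotent (U - 1)) :
    ∃ P : Matrix n n K[X], ∀ k : ℕ, P.map (eval (k : K)) = U ^ k := by
  obtain ⟨m, hm⟩ := hU
  choose q hq using exists_eval_natCast_eq_choose K
  refine ⟨∑ i ∈ range m, q i • ((U - 1) ^ i).map C, fun k => ?_⟩
  rw [← add_sub_cancel (1 : Matrix n n K) U, one_add_pow_eq_sum_range_of_pow_eq_zero hm]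
  ext r s
  simp [sum_apply, eval_finsetSum, hq, ← Nat.cast_smul_eq_nsmul K]

lemma mul_eq_one_of_opNorm_pow_mul_pow_le {W V : Matrix n n ℝ} (hW : IsNilpotent (W - 1))
    (hV : IsNilpotent (V - 1)) {M : ℝ} (hM : ∀ k : ℕ, opNorm (W ^ k * V ^ k) ≤ M) :
    W * V = 1 := by
  obtain ⟨P, hP⟩ := exists_map_eval_eq_pow_of_isNilpotent_sub_one hW
  obtain ⟨Q, hQ⟩ := exists_map_eval_eq_pow_of_isNilpotent_sub_one hV
  have hPQ (k : ℕ) : (P * Q).map (eval (k : ℝ)) = W ^ k * V ^ k := by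
    rw [← coe_evalRingHom, Matrix.map_mul, coe_evalRingHom, hP, hQ]
  ext r s
  have hbdd (k : ℕ) : |((P * Q) r s).eval (k : ℝ)| ≤ M := by
    simpa [← hPQ] using (abs_apply_le_opNorm _ r s).trans (hM k)
  calc (W * V) r s = ((P * Q) r s).eval ((1 : ℕ) : ℝ) := by
        simpa using (congrFun₂ (hPQ 1) r s).symm
    _ = ((P * Q) r s).eval 0 := eval_natCast_eq_eval_zero_of_abs_le hbdd 1
    _ = (1 : Matrix n n ℝ) r s := by simpa using congrFun₂ (hPQ 0) r s

end Matrix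

theorem eq_of_coarse_equiv_single_eigenvalue_general {d : ℕ} (A B : Matrix (Fin d) (Fin d) ℝ)
    (lam : ℝ) (hlam : 1 < lam)
    (hAspec : ∀ μ ∈ spectrum ℂ (A.map Complex.ofReal), μ = (lam : ℂ))
    (hBspec : ∀ μ ∈ spectrum ℂ (B.map Complex.ofReal), μ = (lam : ℂ))
    (h : ∃ M : ℝ, ∀ k : ℕ, opNorm (A ^ (-(k : ℤ)) * B ^ (k : ℤ)) ≤ M) :
    A = B := by
  obtain ⟨M, hM⟩ := h
  have hlam0 : lam ≠ 0 := (zero_lt_one.trans hlam).ne'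
  have hU := isNilpotent_inv_smul_sub_one hlam0
    (isNilpotent_sub_smul_one_of_spectrum_subset (L := ℂ) hAspec)
  have hV := isNilpotent_inv_smul_sub_one hlam0
    (isNilpotent_sub_smul_one_of_spectrum_subset (L := ℂ) hBspec)
  have hUdet := isUnit_det_of_isNilpotent_sub_one hU
  have hUV : (lam⁻¹ • A)⁻¹ * (lam⁻¹ • B) = 1 :=
    mul_eq_one_of_opNorm_pow_mul_pow_le (isNilpotent_nonsing_inv_sub_one hU) hV fun k => by
      simpa only [← smul_zpow_neg_mul_smul_zpow hlam0 hUdet, smul_inv_smul₀ hlam0] using hM k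
  rw [← smul_inv_smul₀ hlam0 A, ← smul_inv_smul₀ hlam0 B, ← inv_eq_right_inv hUV,
    nonsing_inv_nonsing_inv _ hUdet]

/-- Coarsely equivalent expansive matrices with a common single positive eigenvalue are
equal. -/
theorem eq_of_coarse_equiv_single_eigenvalue {d : ℕ} (A B : Matrix (Fin d) (Fin d) ℝ)
    (hA : Expansive A) (hB : Expansive B) (lam : ℝ) (hlam : 1 < lam)
    (hAspec : ∀ μ ∈ spectrum ℂ (A.map Complex.ofReal), μ = (lam : ℂ))
    (hBspec : ∀ μ ∈ spectrum ℂ (B.map Complex.ofReal), μ = (lam : ℂ))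
    (h : ∃ M : ℝ, ∀ k : ℕ, opNorm (A ^ (-(k : ℤ)) * B ^ (k : ℤ)) ≤ M) :
    A = B :=
  eq_of_coarse_equiv_single_eigenvalue_general A B lam hlam hAspec hBspec h
end
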